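/- Every graph G with infinite colouring number possesses a good well-ordering of its vertex set of order type equal to the cardinality of V(G), i.e., a well-ordering of length |V(G)| in which every vertex has fewer than col(G) neighbours preceding it. -/

import Mathlib

open Cardinal

universe u v

/-- A well-ordering of the vertices of `G` in which every vertex has
fewer than `μ` neighbours preceding it (a *good* well-ordering for `μ`). -/
def HasGoodOrder {V : Type u} (G : SimpleGraph V) (μ : Cardinal.{u}) : Prop :=
  ∃ r : V → V → Prop, IsWellOrder V r ∧ ∀ v : V, #{w : V | G.Adj v w ∧ r w v} < μ

/-- The colouring number of `G`: the least cardinal `κ` admitting a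
well-ordering of the vertices in which each vertex has fewer than `κ`
earlier neighbours. -/
noncomputable def col {V : Type u} (G : SimpleGraph V) : Cardinal.{u} :=
  sInf {μ : Cardinal.{u} | HasGoodOrder G μ}

/-- `X` is robust (for `μ`): every vertex outside `X` has fewer than `μ`
neighbours inside `X`. -/
def Robust {V : Type u} (G : SimpleGraph V) (μ : Cardinal.{u}) (X : Set V) : Prop :=
  ∀ v ∉ X, #(G.neighborSet v ∩ X : Set V) < μ

/-- `G` contains a `μ`-barricade as a subgraph: disjoint vertex sets `A`, `B`
with `|A| < |B|` such that every vertex of `B` has at least `μ` neighbours in `A`. -/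
def HasBarricade {V : Type u} (G : SimpleGraph V) (μ : Cardinal.{u}) : Prop :=
  ∃ A B : Set V, Disjoint A B ∧ #A < #B ∧
    ∀ b ∈ B, μ ≤ #(G.neighborSet b ∩ A : Set V)

/-- `G` contains a `μ`-obstruction of type I as a subgraph: disjoint sets `A`, `B`
with `|A| = λ ≥ μ`, `|B| = λ⁺`, every vertex of `B` having at least `μ`
neighbours in `A` and every vertex of `A` having `λ⁺` neighbours in `B`. -/
def HasTypeIObstruction {V : Type u} (G : SimpleGraph V) (μ : Cardinal.{u}) : Prop :=
  ∃ (A B : Set V) (lam : Cardinal.{u}), Disjoint A B ∧ μ ≤ lam ∧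
    #A = lam ∧ #B = Order.succ lam ∧
    (∀ b ∈ B, μ ≤ #(G.neighborSet b ∩ A : Set V)) ∧
    (∀ a ∈ A, #(G.neighborSet a ∩ B : Set V) = Order.succ lam)

/-- `G` itself is a `μ`-obstruction of type I: a bipartite graph with
bipartition `(A, B)` satisfying the type I conditions. -/
def IsTypeIObstruction {V : Type u} (G : SimpleGraph V) (μ : Cardinal.{u}) : Prop :=
  ∃ (A B : Set V) (lam : Cardinal.{u}), Disjoint A B ∧ A ∪ B = Set.univ ∧
    (∀ a b, G.Adj a b → (a ∈ A ∧ b ∈ B) ∨ (a ∈ B ∧ b ∈ A)) ∧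
    μ ≤ lam ∧ #A = lam ∧ #B = Order.succ lam ∧
    (∀ b ∈ B, μ ≤ #(G.neighborSet b ∩ A : Set V)) ∧
    (∀ a ∈ A, #(G.neighborSet a ∩ B : Set V) = Order.succ lam)

/-- `C` is closed and unbounded in the ordinal `o`. -/
def IsClubIn (C : Set Ordinal.{v}) (o : Ordinal.{v}) : Prop :=
  (∀ a < o, ∃ b ∈ C, a ≤ b ∧ b < o) ∧
  (∀ a < o, a ≠ 0 → sSup (C ∩ Set.Iio a) = a → a ∈ C)

/-- `S` is stationary in the ordinal `o`: it meets every club subset of `o`. -/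
def IsStationaryIn (S : Set Ordinal.{v}) (o : Ordinal.{v}) : Prop :=
  ∀ C : Set Ordinal.{v}, IsClubIn C o → (S ∩ C ∩ Set.Iio o).Nonempty

/-- The set `T_H` of vertices `α` (ordinals) with `cf α = cf μ`, whose set of
neighbours below `α` has order type `μ` and supremum `α`. -/
noncomputable def typeIITarget (H : SimpleGraph Ordinal.{v}) (μ : Cardinal.{v}) :
    Set Ordinal.{v} :=
  {α | α.cof = μ.ord.cof ∧
    Ordinal.type (Subrel ((· < ·) : Ordinal.{v} → Ordinal.{v} → Prop)
      (· ∈ H.neighborSet α ∩ Set.Iio α)) = Ordinal.lift.{v + 1} μ.ord ∧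
    sSup (H.neighborSet α ∩ Set.Iio α) = α}

/-- `H` is a `μ`-obstruction of type II with vertex set the regular cardinal
`κ > μ` (realised as the ordinals below `κ`): `T_H` is stationary in `κ`. -/
def IsTypeIIObstruction (H : SimpleGraph Ordinal.{v}) (μ κ : Cardinal.{v}) : Prop :=
  μ < κ ∧ κ.IsRegular ∧ (∀ a b, H.Adj a b → a < κ.ord ∧ b < κ.ord) ∧
  IsStationaryIn (typeIITarget H μ) κ.ord

/-- `G` contains a `μ`-obstruction of type II as a subgraph. -/
def HasTypeIIObstruction {V : Type u} (G : SimpleGraph V) (μ : Cardinal.{v}) : Prop :=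
  ∃ (κ : Cardinal.{v}) (H : SimpleGraph Ordinal.{v}) (f : Ordinal.{v} → V),
    Set.InjOn f (Set.Iio κ.ord) ∧ (∀ a b, H.Adj a b → G.Adj (f a) (f b)) ∧
    IsTypeIIObstruction H μ κ

/-- `G` contains a complete subgraph on `μ` vertices. -/
def HasCompleteSubgraph {V : Type u} (G : SimpleGraph V) (μ : Cardinal.{u}) : Prop :=
  ∃ S : Set V, #S = μ ∧ S.Pairwise G.Adj

/-- `G` contains an induced copy of the complete bipartite graph `K_{k,ω}`. -/
def HasInducedKkOmega {V : Type u} (G : SimpleGraph V) (k : ℕ) : Prop :=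
  ∃ A B : Set V, Disjoint A B ∧ #A = (k : Cardinal.{u}) ∧ #B = ℵ₀ ∧
    (∀ a ∈ A, ∀ b ∈ B, G.Adj a b) ∧
    (∀ a ∈ A, ∀ a' ∈ A, a ≠ a' → ¬ G.Adj a a') ∧
    (∀ b ∈ B, ∀ b' ∈ B, b ≠ b' → ¬ G.Adj b b')

/-!
Fix a good well-ordering `r` for an infinite `μ` and a well-ordering `q` of type `|V|`. If
`|V| ≤ μ`, then `q` is already good. Otherwise the set of vertices reached from `u` by repeatedly
passing to an `r`-earlier neighbour has size at most `μ`, since each step offers fewer than `μ`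
choices. Sorting the vertices first by the `q`-least `u` that reaches them and then by `r` gives a
well-ordering whose initial segments are unions of fewer than `|V|` such sets, and in which a
neighbour that comes earlier is still `r`-earlier.
-/

lemma Cardinal.mk_biUnion_le_of_forall_le {ι α : Type u} {s : Set ι} {A : ι → Set α}
    {μ : Cardinal.{u}} (hμ : ℵ₀ ≤ μ) (hs : #s ≤ μ) (hA : ∀ i ∈ s, #(A i) ≤ μ) :
    #(⋃ i ∈ s, A i) ≤ μ := by
  calc #(⋃ i ∈ s, A i) ≤ #s * ⨆ i : s, #(A i) := mk_biUnion_le A s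
    _ ≤ μ * μ := mul_le_mul' hs (ciSup_le' fun i => hA i.1 i.2)
    _ = μ := mul_eq_self hμ

lemma Cardinal.mk_biUnion_lt_of_lt {ι α : Type u} {s : Set ι} {A : ι → Set α}
    {μ κ : Cardinal.{u}} (hκ : ℵ₀ ≤ κ) (hs : #s < κ) (hμ : μ < κ) (hA : ∀ i ∈ s, #(A i) ≤ μ) :
    #(⋃ i ∈ s, A i) < κ := by
  calc #(⋃ i ∈ s, A i) ≤ #s * ⨆ i : s, #(A i) := mk_biUnion_le A s
    _ ≤ #s * μ := mul_le_mul' le_rfl (ciSup_le' fun i => hA i.1 i.2)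
    _ < κ := mul_lt_of_lt hκ hs hμ

/-- Reachable points lie in the countably many iterated images of `{a}`, each of size at most
`μ`. -/
lemma Cardinal.mk_setOf_reflTransGen_le {α : Type u} {R : α → α → Prop} {μ : Cardinal.{u}}
    (hμ : ℵ₀ ≤ μ) (hR : ∀ a, #{b | R a b} ≤ μ) (a : α) :
    #{b | Relation.ReflTransGen R a b} ≤ μ := by
  let step : Set α → Set α := fun X => ⋃ x ∈ X, {b | R x b}
  have mk_iterate_le : ∀ n, #(step^[n] {a}) ≤ μ := by
    intro n
    induction n with
    | zero => exact (mk_singleton a).trans_le (one_le_aleph0.trans hμ)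
    | succ n ih =>
      rw [Function.iterate_succ_apply']
      exact mk_biUnion_le_of_forall_le hμ ih fun x _ => hR x
  have reachable_sub :
      {b | Relation.ReflTransGen R a b} ⊆ ⋃ n : ULift.{u} ℕ, step^[n.down] {a} := by
    intro b hb
    induction hb with
    | refl => exact Set.mem_iUnion.2 ⟨⟨0⟩, rfl⟩
    | tail _ hcb ih =>
      obtain ⟨⟨n⟩, hn⟩ := Set.mem_iUnion.1 ih
      refine Set.mem_iUnion.2 ⟨⟨n + 1⟩, ?_⟩
      rw [Function.iterate_succ_apply']
      exact Set.mem_biUnion hn hcb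
  calc #{b | Relation.ReflTransGen R a b}
      ≤ #(ULift.{u} ℕ) * ⨆ n : ULift.{u} ℕ, #(step^[n.down] {a}) :=
        (mk_le_mk_of_subset reachable_sub).trans (mk_iUnion_le _)
    _ ≤ μ * μ := mul_le_mul' (mk_le_aleph0.trans hμ) (ciSup_le' fun n => mk_iterate_le _)
    _ = μ := mul_eq_self hμ

lemma type_eq_ord_of_forall_mk_lt {V : Type u} (s : V → V → Prop) [IsWellOrder V s]
    (h : ∀ v : V, #{w : V | s w v} < #V) : Ordinal.type s = (#V).ord := by
  refine le_antisymm (not_lt.1 fun hlt => ?_) (ord_le.2 (Ordinal.card_type s).ge)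
  obtain ⟨v, hv⟩ := Ordinal.typein_surj s hlt
  have := Ordinal.card_typein (r := s) v
  rw [hv, card_ord] at this
  exact (h v).ne this.symm

namespace SimpleGraph

variable {V : Type u} (G : SimpleGraph V) (r q : V → V → Prop)

def downClosure (u : V) : Set V :=
  {w | Relation.ReflTransGen (fun x y => G.Adj x y ∧ r y x) u w}

lemma mem_downClosure_self (u : V) : u ∈ G.downClosure r u :=
  Relation.ReflTransGen.refl

variable {G r} in
lemma mem_downClosure_of_adj {u v w : V} (hv : v ∈ G.downClosure r u) (hvw : G.Adj v w)
    (hwv : r w v) : w ∈ G.downClosure r u :=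
  Relation.ReflTransGen.tail hv ⟨hvw, hwv⟩

variable {G r} in
lemma mk_downClosure_le {μ : Cardinal.{u}} (hμ : ℵ₀ ≤ μ)
    (hr : ∀ v, #{w | G.Adj v w ∧ r w v} ≤ μ) (u : V) : #(G.downClosure r u) ≤ μ :=
  mk_setOf_reflTransGen_le hμ hr u

variable [IsWellOrder V q]

noncomputable def downRoot (v : V) : V :=
  IsWellFounded.wf.min (r := q) {u | v ∈ G.downClosure r u} ⟨v, G.mem_downClosure_self r v⟩

lemma mem_downClosure_downRoot (v : V) : v ∈ G.downClosure r (G.downRoot r q v) :=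
  IsWellFounded.wf.min_mem (r := q) {u | v ∈ G.downClosure r u} _

variable {G r q} in
lemma not_lt_downRoot {u v : V} (hv : v ∈ G.downClosure r u) : ¬ q u (G.downRoot r q v) :=
  IsWellFounded.wf.not_lt_min (r := q) {u | v ∈ G.downClosure r u} hv

def downRootOrder : V → V → Prop :=
  (⟨fun v => (G.downRoot r q v, v), fun _ _ h => congrArg Prod.snd h⟩ : V ↪ V × V) ⁻¹'o
    Prod.Lex q r

variable {G r q} in
lemma mk_setOf_downRootOrder_lt {μ : Cardinal.{u}} (hV : ℵ₀ ≤ #V) (hμ : μ < #V)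
    (hq : ∀ u, #{x | q x u} < #V) (hcl : ∀ u, #(G.downClosure r u) ≤ μ) (v : V) :
    #{w | G.downRootOrder r q w v} < #V := by
  have hsub : {w | G.downRootOrder r q w v} ⊆
      (⋃ u ∈ {u | q u (G.downRoot r q v)}, G.downClosure r u) ∪
        G.downClosure r (G.downRoot r q v) := by
    intro w hw
    rcases Prod.lex_iff.1 hw with hroot | ⟨hroot, -⟩
    · exact Or.inl (Set.mem_biUnion hroot (G.mem_downClosure_downRoot r q w))
    · have hroot : G.downRoot r q w = G.downRoot r q v := hroot
      exact Or.inr (hroot ▸ G.mem_downClosure_downRoot r q w)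
  refine (mk_le_mk_of_subset hsub).trans_lt <| (mk_union_le _ _).trans_lt <| add_lt_of_lt hV ?_ ?_
  · exact mk_biUnion_lt_of_lt hV (hq _) hμ fun u _ => hcl u
  · exact (hcl _).trans_lt hμ

variable [IsWellOrder V r]

instance : IsWellOrder V (G.downRootOrder r q) :=
  (RelEmbedding.preimage _ _).isWellOrder

variable {G r q} in
/-- If `w` had a `q`-smaller root and came `r`-after `v`, then `v` would be an `r`-earlier
neighbour of `w`, hence reached from the root of `w`, contradicting the minimality of its root. -/
lemma downRootOrder_adj {v w : V} (hvw : G.Adj v w) (hwv : G.downRootOrder r q w v) : r w v := by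
  rcases Prod.lex_iff.1 hwv with hroot | ⟨-, hr⟩
  · rcases trichotomous_of r w v with hr | rfl | hr
    · exact hr
    · exact absurd hvw G.irrefl
    · exact absurd hroot <| not_lt_downRoot <|
        mem_downClosure_of_adj (G.mem_downClosure_downRoot r q w) hvw.symm hr
  · exact hr

end SimpleGraph

lemma hasGoodOrder_succ_mk {V : Type u} (G : SimpleGraph V) : HasGoodOrder G (Order.succ #V) :=
  ⟨WellOrderingRel, inferInstance, fun _ => (mk_set_le _).trans_lt (Order.lt_succ _)⟩

lemma hasGoodOrder_col {V : Type u} (G : SimpleGraph V) : HasGoodOrder G (col G) :=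
  csInf_mem (s := {μ | HasGoodOrder G μ}) ⟨_, hasGoodOrder_succ_mk G⟩

theorem HasGoodOrder.exists_type_eq_ord {V : Type u} {G : SimpleGraph V} {μ : Cardinal.{u}}
    (hμ : ℵ₀ ≤ μ) (hG : HasGoodOrder G μ) :
    ∃ (r : V → V → Prop) (wo : IsWellOrder V r),
      @Ordinal.type V r wo = (#V).ord ∧ ∀ v : V, #{w : V | G.Adj v w ∧ r w v} < μ := by
  obtain ⟨r, hr, hgood⟩ := hG
  obtain ⟨q, hq, hqtype⟩ := exists_ord_eq V
  have hqsmall : ∀ v, #{w | q w v} < #V := fun v => card_typein_lt v hqtype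
  rcases le_or_gt #V μ with hVμ | hVμ
  · refine ⟨q, hq, hqtype.symm, fun v => ?_⟩
    exact (mk_le_mk_of_subset fun w hw => hw.2).trans_lt ((hqsmall v).trans_le hVμ)
  · have hcl := G.mk_downClosure_le hμ fun v => (hgood v).le
    refine ⟨G.downRootOrder r q, inferInstance, type_eq_ord_of_forall_mk_lt _
      (SimpleGraph.mk_setOf_downRootOrder_lt (hμ.trans hVμ.le) hVμ hqsmall hcl), fun v => ?_⟩
    have hsub : {w | G.Adj v w ∧ G.downRootOrder r q w v} ⊆ {w | G.Adj v w ∧ r w v} :=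
      fun w hw => ⟨hw.1, SimpleGraph.downRootOrder_adj hw.1 hw.2⟩
    exact (mk_le_mk_of_subset hsub).trans_lt (hgood v)

/-- every graph with infinite colouring number has a good
well-ordering of its vertices of order type `|V(G)|`. -/
theorem stmt6 {V : Type u} (G : SimpleGraph V) (h : ℵ₀ ≤ col G) :
    ∃ (r : V → V → Prop) (wo : IsWellOrder V r),
      @Ordinal.type V r wo = (#V).ord ∧
      ∀ v : V, #{w : V | G.Adj v w ∧ r w v} < col G :=
  (hasGoodOrder_col G).exists_type_eq_ord h
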